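/- (Fourier transform of the entire approximation to truncated exponential decay, Lemma) For every γ > 0 and every real k, (1/√(2π))·∫_{ℝ} f₁(x;γ)·e^{ikx} dx = (1/√(2π))·(1/(1−ik))·e^{−(k²+1)/(4γ²)}. -/

import Mathlib

open MeasureTheory Complex
open scoped Real

noncomputable section

/-- The complementary error function `erfc(x) = (2/√π) ∫_x^∞ e^{-y²} dy`. -/
def erfc (x : ℝ) : ℝ := (2 / Real.sqrt Real.pi) * ∫ y in Set.Ioi x, Real.exp (-y ^ 2)

/-- `f₁(x;γ) = (1/2) e^{-x} erfc(1/(2γ) - γx)`. -/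
def f₁ (γ x : ℝ) : ℝ := (1 / 2) * Real.exp (-x) * erfc (1 / (2 * γ) - γ * x)

lemma gauss_int : Integrable (fun y : ℝ => Real.exp (-y ^ 2)) := by
  simpa using integrable_exp_neg_mul_sq (one_pos (α := ℝ))

lemma gauss_cont : Continuous (fun y : ℝ => Real.exp (-y ^ 2)) := by fun_prop

lemma E_hasDerivAt (x : ℝ) :
    HasDerivAt (fun t : ℝ => ∫ y in Set.Ioi t, Real.exp (-y ^ 2)) (-Real.exp (-x ^ 2)) x := by
  have hfun : ∀ t : ℝ, (∫ y in Set.Ioi t, Real.exp (-y ^ 2)) =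
      ((∫ y : ℝ, Real.exp (-y ^ 2)) - ∫ y in Set.Iic (0:ℝ), Real.exp (-y ^ 2))
        - ∫ y in (0:ℝ)..t, Real.exp (-y ^ 2) := by
    intro t
    have h1 := intervalIntegral.integral_Iic_add_Ioi (b := t) gauss_int.integrableOn gauss_int.integrableOn
    have h2 := intervalIntegral.integral_Iic_sub_Iic (a := (0:ℝ)) (b := t)
      gauss_int.integrableOn gauss_int.integrableOn
    linarith
  have hd : HasDerivAt (fun t : ℝ =>
      ((∫ y : ℝ, Real.exp (-y ^ 2)) - ∫ y in Set.Iic (0:ℝ), Real.exp (-y ^ 2))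
        - ∫ y in (0:ℝ)..t, Real.exp (-y ^ 2)) (-Real.exp (-x ^ 2)) x := by
    exact (intervalIntegral.integral_hasDerivAt_right gauss_int.intervalIntegrable
      (gauss_cont.stronglyMeasurableAtFilter _ _) gauss_cont.continuousAt).const_sub _
  simpa only [← hfun] using hd

lemma erfc_hasDerivAt (x : ℝ) :
    HasDerivAt erfc (-(2 / Real.sqrt Real.pi * Real.exp (-x ^ 2))) x := by
  have := (E_hasDerivAt x).const_mul (2 / Real.sqrt Real.pi)
  rw [mul_neg] at this
  exact this

lemma erfc_cont : Continuous erfc :=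
  continuous_iff_continuousAt.mpr fun x => (erfc_hasDerivAt x).continuousAt

lemma erfc_nonneg (x : ℝ) : 0 ≤ erfc x :=
  mul_nonneg (div_nonneg (by norm_num) (Real.sqrt_nonneg _))
    (setIntegral_nonneg measurableSet_Ioi fun y _ => (Real.exp_pos _).le)

lemma sqrtpi_pos : (0:ℝ) < Real.sqrt Real.pi := Real.sqrt_pos.mpr Real.pi_pos

lemma erfc_le_two (x : ℝ) : erfc x ≤ 2 := by
  have h1 : (∫ y in Set.Ioi x, Real.exp (-y ^ 2)) ≤ ∫ y : ℝ, Real.exp (-y ^ 2) :=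
    setIntegral_le_integral gauss_int (Filter.Eventually.of_forall fun y => (Real.exp_pos _).le)
  have h2 : (∫ y : ℝ, Real.exp (-y ^ 2)) = Real.sqrt Real.pi := by
    simpa using integral_gaussian 1
  have := mul_le_mul_of_nonneg_left (h1.trans h2.le)
    (by positivity : (0:ℝ) ≤ 2 / Real.sqrt Real.pi)
  calc erfc x ≤ 2 / Real.sqrt Real.pi * Real.sqrt Real.pi := this
    _ = 2 := by field_simp

lemma erfc_le_exp {x : ℝ} (hx : 0 ≤ x) : erfc x ≤ 2 * Real.exp (-x ^ 2) := by
  have hshift : Integrable (fun y : ℝ => Real.exp (-(y - x) ^ 2)) :=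
    gauss_int.comp_sub_right x
  have h1 : (∫ y in Set.Ioi x, Real.exp (-y ^ 2)) ≤
      ∫ y in Set.Ioi x, Real.exp (-x ^ 2) * Real.exp (-(y - x) ^ 2) := by
    refine setIntegral_mono_on gauss_int.integrableOn
      ((hshift.const_mul _).integrableOn) measurableSet_Ioi ?_
    intro y hy
    rw [← Real.exp_add]
    apply Real.exp_le_exp.mpr
    have : x ≤ y := (le_of_lt hy)
    nlinarith
  have h2 : (∫ y in Set.Ioi x, Real.exp (-x ^ 2) * Real.exp (-(y - x) ^ 2)) ≤
      Real.exp (-x ^ 2) * Real.sqrt Real.pi := by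
    rw [integral_const_mul]
    refine mul_le_mul_of_nonneg_left ?_ (Real.exp_pos _).le
    have h3 : (∫ y in Set.Ioi x, Real.exp (-(y - x) ^ 2)) ≤
        ∫ y : ℝ, Real.exp (-(y - x) ^ 2) :=
      setIntegral_le_integral hshift (Filter.Eventually.of_forall fun y => (Real.exp_pos _).le)
    have h4 : (∫ y : ℝ, Real.exp (-(y - x) ^ 2)) = Real.sqrt Real.pi := by
      rw [integral_sub_right_eq_self (fun y : ℝ => Real.exp (-y ^ 2)) x]
      simpa using integral_gaussian 1
    exact h3.trans h4.le
  have := mul_le_mul_of_nonneg_left (h1.trans h2)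
    (by positivity : (0:ℝ) ≤ 2 / Real.sqrt Real.pi)
  calc erfc x ≤ 2 / Real.sqrt Real.pi * (Real.exp (-x ^ 2) * Real.sqrt Real.pi) := this
    _ = 2 * Real.exp (-x ^ 2) := by field_simp

lemma f₁_nonneg (γ x : ℝ) : 0 ≤ f₁ γ x :=
  mul_nonneg (mul_nonneg (by norm_num) (Real.exp_pos _).le) (erfc_nonneg _)

/-- dominating function -/
def bd (γ x : ℝ) : ℝ :=
  Real.exp (-(1 / (4 * γ ^ 2))) * Real.exp (-γ ^ 2 * x ^ 2) + Real.exp (-|x|)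

lemma f₁_le_bd {γ : ℝ} (hγ : 0 < γ) (x : ℝ) : f₁ γ x ≤ bd γ x := by
  have hb2 : (0:ℝ) < Real.exp (-|x|) := Real.exp_pos _
  rcases le_or_gt x (1 / (2 * γ ^ 2)) with hx | hx
  · have hu : 0 ≤ 1 / (2 * γ) - γ * x := by
      rw [sub_nonneg]
      calc γ * x ≤ γ * (1 / (2 * γ ^ 2)) := mul_le_mul_of_nonneg_left hx hγ.le
        _ = 1 / (2 * γ) := by field_simp
    have h1 : f₁ γ x ≤ (1/2) * Real.exp (-x) * (2 * Real.exp (-(1/(2*γ) - γ*x) ^ 2)) := by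
      unfold f₁
      exact mul_le_mul_of_nonneg_left (erfc_le_exp hu) (by positivity)
    have h2 : (1/2) * Real.exp (-x) * (2 * Real.exp (-(1/(2*γ) - γ*x) ^ 2)) =
        Real.exp (-(1 / (4 * γ ^ 2))) * Real.exp (-γ ^ 2 * x ^ 2) := by
      have e1 : (1:ℝ)/2 * Real.exp (-x) * (2 * Real.exp (-(1/(2*γ) - γ*x) ^ 2)) =
          Real.exp (-x + -(1/(2*γ) - γ*x) ^ 2) := by rw [Real.exp_add]; ring
      have e2 : Real.exp (-(1 / (4 * γ ^ 2))) * Real.exp (-γ ^ 2 * x ^ 2) =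
          Real.exp (-(1 / (4 * γ ^ 2)) + -γ ^ 2 * x ^ 2) := (Real.exp_add _ _).symm
      rw [e1, e2]
      congr 1
      field_simp
      ring
    have : f₁ γ x ≤ Real.exp (-(1 / (4 * γ ^ 2))) * Real.exp (-γ ^ 2 * x ^ 2) := h1.trans h2.le
    unfold bd; linarith
  · have hx0 : 0 < x := lt_of_lt_of_le (by positivity) hx.le
    have h1 : f₁ γ x ≤ (1/2) * Real.exp (-x) * 2 := by
      unfold f₁
      exact mul_le_mul_of_nonneg_left (erfc_le_two _) (by positivity)
    have h2 : (1/2) * Real.exp (-x) * 2 = Real.exp (-|x|) := by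
      rw [abs_of_pos hx0]; ring
    have hb1 : (0:ℝ) ≤ Real.exp (-(1 / (4 * γ ^ 2))) * Real.exp (-γ ^ 2 * x ^ 2) := by positivity
    unfold bd; linarith [h1.trans h2.le]

lemma exp_neg_abs_integrable : Integrable (fun x : ℝ => Real.exp (-|x|)) := by
  have h1 : IntegrableOn (fun x : ℝ => Real.exp (-|x|)) (Set.Iic 0) := by
    apply (integrableOn_exp_Iic 0).congr_fun ?_ measurableSet_Iic
    intro x hx
    simp only [Set.mem_Iic] at hx
    simp [abs_of_nonpos hx]
  have h2 : IntegrableOn (fun x : ℝ => Real.exp (-|x|)) (Set.Ioi 0) := by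
    apply ((exp_neg_integrableOn_Ioi 0 (one_pos)).congr_fun ?_ measurableSet_Ioi)
    intro x hx
    simp only [Set.mem_Ioi] at hx
    simp [abs_of_pos hx]
  have := h1.union h2
  rwa [Set.Iic_union_Ioi, integrableOn_univ] at this

lemma bd_integrable {γ : ℝ} (hγ : 0 < γ) : Integrable (bd γ) := by
  unfold bd
  exact ((integrable_exp_neg_mul_sq (by positivity : (0:ℝ) < γ ^ 2)).const_mul _).add
    exp_neg_abs_integrable

lemma bd_tendsto {γ : ℝ} (hγ : 0 < γ) {l : Filter ℝ}
    (h2 : Filter.Tendsto (fun x : ℝ => |x|) l Filter.atTop) :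
    Filter.Tendsto (bd γ) l (nhds 0) := by
  have h3 : Filter.Tendsto (fun x : ℝ => x ^ 2) l Filter.atTop := by
    have := (Filter.tendsto_pow_atTop (two_ne_zero)).comp h2
    simpa [Function.comp_def, sq_abs] using this
  have hsq : Filter.Tendsto (fun x : ℝ => -γ ^ 2 * x ^ 2) l Filter.atBot :=
    h3.const_mul_atTop_of_neg (neg_lt_zero.mpr (by positivity))
  have e1 : Filter.Tendsto (fun x : ℝ => Real.exp (-γ ^ 2 * x ^ 2)) l (nhds 0) :=
    Real.tendsto_exp_atBot.comp hsq
  have e2 : Filter.Tendsto (fun x : ℝ => Real.exp (-|x|)) l (nhds 0) :=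
    Real.tendsto_exp_atBot.comp (Filter.tendsto_neg_atTop_atBot.comp h2)
  unfold bd
  have h0 : (0:ℝ) = Real.exp (-(1 / (4 * γ ^ 2))) * 0 + 0 := by norm_num
  rw [show nhds (0:ℝ) = nhds (Real.exp (-(1 / (4 * γ ^ 2))) * 0 + 0) by rw [← h0]]
  exact (e1.const_mul _).add e2

lemma f₁_cont (γ : ℝ) : Continuous (f₁ γ) := by
  unfold f₁
  exact (continuous_const.mul (Real.continuous_exp.comp continuous_neg)).mul
    (erfc_cont.comp (continuous_const.sub (continuous_const.mul continuous_id)))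

lemma f₁_hasDerivAt {γ : ℝ} (hγ : 0 < γ) (x : ℝ) :
    HasDerivAt (f₁ γ)
      (-(f₁ γ x) + γ / Real.sqrt Real.pi *
        (Real.exp (-(1 / (4 * γ ^ 2))) * Real.exp (-γ ^ 2 * x ^ 2))) x := by
  have hu : HasDerivAt (fun x : ℝ => 1 / (2 * γ) - γ * x) (-γ) x := by
    simpa using ((hasDerivAt_id x).const_mul γ).const_sub (1 / (2 * γ))
  have h1 : HasDerivAt (fun x : ℝ => erfc (1 / (2 * γ) - γ * x))
      (-(2 / Real.sqrt Real.pi * Real.exp (-(1 / (2 * γ) - γ * x) ^ 2)) * (-γ)) x :=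
    (erfc_hasDerivAt _).comp x hu
  have h2 : HasDerivAt (fun x : ℝ => (1:ℝ) / 2 * Real.exp (-x))
      (-(1 / 2 * Real.exp (-x))) x := by
    have := (((hasDerivAt_id x).neg).exp).const_mul ((1:ℝ)/2)
    simpa using this
  have h3 := h2.mul h1
  have key : Real.exp (-x) * Real.exp (-(1 / (2 * γ) - γ * x) ^ 2) =
      Real.exp (-(1 / (4 * γ ^ 2))) * Real.exp (-γ ^ 2 * x ^ 2) := by
    rw [← Real.exp_add, ← Real.exp_add]
    congr 1
    field_simp
    ring
  refine h3.congr_deriv (Eq.symm ?_)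
  unfold f₁
  rw [show -(1 / 2 * Real.exp (-x)) * erfc (1 / (2 * γ) - γ * x) +
      1 / 2 * Real.exp (-x) * (-(2 / Real.sqrt Real.pi *
        Real.exp (-(1 / (2 * γ) - γ * x) ^ 2)) * -γ) =
      -(1 / 2 * Real.exp (-x) * erfc (1 / (2 * γ) - γ * x)) +
      γ / Real.sqrt Real.pi * (Real.exp (-x) * Real.exp (-(1 / (2 * γ) - γ * x) ^ 2)) by ring,
    key]

lemma norm_cexp_Ikx (k x : ℝ) : ‖Complex.exp (Complex.I * k * x)‖ = 1 := by
  rw [Complex.norm_exp]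
  simp

lemma cexp_cont (k : ℝ) : Continuous (fun x : ℝ => Complex.exp (Complex.I * k * x)) := by
  fun_prop

/-- **Fourier transform of the entire approximation to truncated exponential decay (Lemma).** -/
theorem fourier_transform_f₁ (γ : ℝ) (hγ : 0 < γ) (k : ℝ) :
    ((Real.sqrt (2 * Real.pi) : ℂ))⁻¹ *
        (∫ x : ℝ, (f₁ γ x : ℂ) * Complex.exp (Complex.I * k * x)) =
      ((Real.sqrt (2 * Real.pi) : ℂ))⁻¹ * (1 / (1 - Complex.I * k)) *
        Complex.exp (-(((k : ℂ) ^ 2 + 1) / (4 * (γ : ℂ) ^ 2))) := by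
  have hγ2 : (0:ℝ) < γ ^ 2 := by positivity
  have hγC : (γ : ℂ) ≠ 0 := Complex.ofReal_ne_zero.mpr hγ.ne'
  have hbre : (0:ℝ) < ((γ : ℂ) ^ 2).re := by
    rw [show ((γ:ℂ)^2) = ((γ^2 : ℝ) : ℂ) by push_cast; ring, Complex.ofReal_re]
    exact hγ2
  set c : ℝ := γ / Real.sqrt Real.pi * Real.exp (-(1 / (4 * γ ^ 2))) with hc
  set g : ℝ → ℂ := fun x => (f₁ γ x : ℂ) * Complex.exp (Complex.I * k * x) with hgdef
  set G' : ℝ → ℂ := fun x =>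
    (Complex.I * k - 1) * ((f₁ γ x : ℂ) * Complex.exp (Complex.I * k * x)) +
      (c : ℂ) * (Complex.exp (Complex.I * k * x) *
        Complex.exp (-(γ : ℂ) ^ 2 * (x : ℂ) ^ 2)) with hG'def
  -- derivative
  have hgderiv : ∀ x : ℝ, HasDerivAt g (G' x) x := by
    intro x
    have h1 := (f₁_hasDerivAt hγ x).ofReal_comp
    have h2 : HasDerivAt (fun x : ℝ => Complex.exp (Complex.I * k * x))
        (Complex.I * k * Complex.exp (Complex.I * k * x)) x := by
      have h0 : HasDerivAt (fun x : ℝ => Complex.I * (k:ℂ) * (x:ℂ)) (Complex.I * k) x := by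
        simpa using (Complex.ofRealCLM.hasDerivAt (x := x)).const_mul (Complex.I * (k:ℂ))
      simpa [mul_comm] using h0.cexp
    have h3 := h1.mul h2
    rw [hgdef, hG'def]
    refine h3.congr_deriv (Eq.symm ?_)
    rw [hc]
    push_cast [Complex.ofReal_exp]
    ring
  -- integrability
  have hmeas1 : AEStronglyMeasurable
      (fun x : ℝ => (f₁ γ x : ℂ) * Complex.exp (Complex.I * k * x)) volume :=
    ((Complex.continuous_ofReal.comp (f₁_cont γ)).mul (cexp_cont k)).aestronglyMeasurable
  have hI1 : Integrable (fun x : ℝ => (f₁ γ x : ℂ) * Complex.exp (Complex.I * k * x)) := by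
    refine (bd_integrable hγ).mono' hmeas1 (Filter.Eventually.of_forall fun x => ?_)
    rw [norm_mul, norm_cexp_Ikx, mul_one, Complex.norm_real,
      Real.norm_of_nonneg (f₁_nonneg γ x)]
    exact f₁_le_bd hγ x
  have hI2 : Integrable (fun x : ℝ => Complex.exp (Complex.I * (k:ℂ) * (x:ℂ)) *
      Complex.exp (-(γ : ℂ) ^ 2 * (x : ℂ) ^ 2)) := by
    have h := integrable_cexp_quadratic hbre (Complex.I * k) 0
    apply h.congr
    filter_upwards with x
    rw [← Complex.exp_add]
    ring_nf
  have hG'int : Integrable G' := by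
    rw [hG'def]
    exact (hI1.const_mul _).add (hI2.const_mul _)
  -- limits at infinity
  have hnorm_le : ∀ x : ℝ, ‖g x‖ ≤ bd γ x := by
    intro x
    rw [hgdef]
    simp only []
    rw [norm_mul, norm_cexp_Ikx, mul_one, Complex.norm_real,
      Real.norm_of_nonneg (f₁_nonneg γ x)]
    exact f₁_le_bd hγ x
  have htop : Filter.Tendsto g Filter.atTop (nhds 0) :=
    squeeze_zero_norm hnorm_le (bd_tendsto hγ Filter.tendsto_abs_atTop_atTop)
  have hbot : Filter.Tendsto g Filter.atBot (nhds 0) :=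
    squeeze_zero_norm hnorm_le (bd_tendsto hγ Filter.tendsto_abs_atBot_atTop)
  -- integral of derivative is zero
  have hIoi : ∫ x in Set.Ioi (0:ℝ), G' x = 0 - g 0 :=
    integral_Ioi_of_hasDerivAt_of_tendsto' (fun x _ => hgderiv x) hG'int.integrableOn htop
  have hIic : ∫ x in Set.Iic (0:ℝ), G' x = g 0 - 0 :=
    integral_Iic_of_hasDerivAt_of_tendsto' (fun x _ => hgderiv x) hG'int.integrableOn hbot
  have htotal : ∫ x : ℝ, G' x = 0 := by
    rw [← intervalIntegral.integral_Iic_add_Ioi hG'int.integrableOn hG'int.integrableOn,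
      hIoi, hIic]
    ring
  -- split the integral
  have hsplit : ∫ x : ℝ, G' x =
      (Complex.I * k - 1) * (∫ x : ℝ, (f₁ γ x : ℂ) * Complex.exp (Complex.I * k * x)) +
        (c : ℂ) * ∫ x : ℝ, Complex.exp (Complex.I * (k:ℂ) * (x:ℂ)) *
          Complex.exp (-(γ : ℂ) ^ 2 * (x : ℂ) ^ 2) := by
    rw [hG'def]
    rw [integral_add (hI1.const_mul _) (hI2.const_mul _), integral_const_mul, integral_const_mul]
  -- Gaussian Fourier integral
  have hgauss : ∫ x : ℝ, Complex.exp (Complex.I * (k:ℂ) * (x:ℂ)) *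
      Complex.exp (-(γ : ℂ) ^ 2 * (x : ℂ) ^ 2) =
      ((Real.pi : ℂ) / (γ : ℂ) ^ 2) ^ ((1:ℂ) / 2) *
        Complex.exp (-(k : ℂ) ^ 2 / (4 * (γ : ℂ) ^ 2)) :=
    fourierIntegral_gaussian hbre (k : ℂ)
  -- simplify the power
  have hpow : ((Real.pi : ℂ) / (γ : ℂ) ^ 2) ^ ((1:ℂ) / 2) =
      ((Real.sqrt Real.pi / γ : ℝ) : ℂ) := by
    have h1 : ((Real.pi : ℂ) / (γ : ℂ) ^ 2) = (((Real.pi / γ ^ 2 : ℝ)) : ℂ) := by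
      push_cast; ring
    have h2 : ((1:ℂ) / 2) = (((1/2 : ℝ)) : ℂ) := by norm_num
    rw [h1, h2, ← Complex.ofReal_cpow (by positivity) (1/2 : ℝ)]
    congr 1
    rw [← Real.sqrt_eq_rpow, Real.sqrt_div Real.pi_pos.le, Real.sqrt_sq hγ.le]
  -- key equation
  have key : (1 - Complex.I * k) *
      (∫ x : ℝ, (f₁ γ x : ℂ) * Complex.exp (Complex.I * k * x)) =
      Complex.exp (-(((k : ℂ) ^ 2 + 1) / (4 * (γ : ℂ) ^ 2))) := by
    have h0 := htotal
    rw [hsplit, hgauss, hpow] at h0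
    have hcc : (c : ℂ) * ((Real.sqrt Real.pi / γ : ℝ) : ℂ) =
        ((Real.exp (-(1 / (4 * γ ^ 2))) : ℝ) : ℂ) := by
      rw [hc]
      push_cast
      have hs : (Real.sqrt Real.pi : ℂ) ≠ 0 := by
        exact_mod_cast Complex.ofReal_ne_zero.mpr sqrtpi_pos.ne'
      field_simp
    have hee : ((Real.exp (-(1 / (4 * γ ^ 2))) : ℝ) : ℂ) *
        Complex.exp (-(k : ℂ) ^ 2 / (4 * (γ : ℂ) ^ 2)) =
        Complex.exp (-(((k : ℂ) ^ 2 + 1) / (4 * (γ : ℂ) ^ 2))) := by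
      rw [Complex.ofReal_exp, ← Complex.exp_add]
      congr 1
      push_cast
      field_simp
      ring
    have h5 : (1 - Complex.I * k) *
        (∫ x : ℝ, (f₁ γ x : ℂ) * Complex.exp (Complex.I * k * x)) =
        (c : ℂ) * (((Real.sqrt Real.pi / γ : ℝ) : ℂ) *
          Complex.exp (-(k : ℂ) ^ 2 / (4 * (γ : ℂ) ^ 2))) := by
      linear_combination -h0
    rw [← mul_assoc, hcc, hee] at h5
    exact h5
  -- conclude
  have hne : (1:ℂ) - Complex.I * k ≠ 0 := by
    intro h
    have := congrArg Complex.re h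
    simp at this
  have hF : (∫ x : ℝ, (f₁ γ x : ℂ) * Complex.exp (Complex.I * k * x)) =
      1 / (1 - Complex.I * k) * Complex.exp (-(((k : ℂ) ^ 2 + 1) / (4 * (γ : ℂ) ^ 2))) := by
    rw [div_mul_eq_mul_div, one_mul, eq_div_iff hne]
    linear_combination key
  rw [hF]
  ring
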